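/- For positive semidefinite symmetric matrices via the W₂ formula: if A is symmetric positive definite with eigenvalues 0 < λ₁ ≤ … ≤ λ_m and orthonormal eigenvectors v₁,…,v_m, then for all x ∈ ℝ^m and t > 0, (|e^{-At}x|² + Tr(Σ_t + Σ_∞ − 2(Σ_t^{1/2}Σ_∞Σ_t^{1/2})^{1/2}))^{1/2} = (Σ_j e^{-2λ_j t}⟨x,v_j⟩² + (1/2)Σ_j (1/λ_j)·e^{-4λ_j t}/(√(1−e^{-2λ_j t})+1)²)^{1/2}, where Σ_t = ∫₀^t e^{-2As} ds and Σ_∞ = (2A)^{-1}. -/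

import Mathlib

open Matrix

noncomputable def euc {m : ℕ} (v : Fin m → ℝ) : EuclideanSpace ℝ (Fin m) := WithLp.toLp 2 v

namespace Stmt9Aux

variable {m : ℕ}

lemma cg_apply (U : Matrix (Fin m) (Fin m) ℝ) (d : Fin m → ℝ) (i j : Fin m) :
    (U * Matrix.diagonal d * Uᵀ) i j = ∑ k, U i k * d k * U j k := by
  rw [Matrix.mul_apply]
  refine Finset.sum_congr rfl fun k _ => ?_
  rw [Matrix.mul_diagonal, Matrix.transpose_apply]

lemma cg_mul {U : Matrix (Fin m) (Fin m) ℝ} (hU : Uᵀ * U = 1) (d e : Fin m → ℝ) :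
    (U * Matrix.diagonal d * Uᵀ) * (U * Matrix.diagonal e * Uᵀ)
      = U * Matrix.diagonal (fun j => d j * e j) * Uᵀ := by
  have h : (U * Matrix.diagonal d * Uᵀ) * (U * Matrix.diagonal e * Uᵀ)
      = U * (Matrix.diagonal d * (Uᵀ * U) * Matrix.diagonal e) * Uᵀ := by
    noncomm_ring
  rw [h, hU, Matrix.mul_one, Matrix.diagonal_mul_diagonal]

lemma cg_trace {U : Matrix (Fin m) (Fin m) ℝ} (hU : Uᵀ * U = 1) (d : Fin m → ℝ) :
    (U * Matrix.diagonal d * Uᵀ).trace = ∑ j, d j := by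
  rw [Matrix.trace_mul_cycle, hU, Matrix.one_mul, Matrix.trace_diagonal]

lemma cg_psd (U : Matrix (Fin m) (Fin m) ℝ) {d : Fin m → ℝ} (hd : ∀ j, 0 ≤ d j) :
    (U * Matrix.diagonal d * Uᵀ).PosSemidef := by
  have h := (Matrix.posSemidef_diagonal_iff.mpr hd).mul_mul_conjTranspose_same U
  rwa [Matrix.conjTranspose_eq_transpose_of_trivial] at h

lemma cg_smul (c : ℝ) (U : Matrix (Fin m) (Fin m) ℝ) (d : Fin m → ℝ) :
    c • (U * Matrix.diagonal d * Uᵀ) = U * Matrix.diagonal (c • d) * Uᵀ := by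
  rw [Matrix.diagonal_smul, mul_smul_comm, smul_mul_assoc]

lemma cg_exp {U : Matrix (Fin m) (Fin m) ℝ} (hU : U * Uᵀ = 1) (d : Fin m → ℝ) :
    NormedSpace.exp (U * Matrix.diagonal d * Uᵀ)
      = U * Matrix.diagonal (fun j => Real.exp (d j)) * Uᵀ := by
  have hinv : U⁻¹ = Uᵀ := Matrix.inv_eq_right_inv hU
  have hunit : IsUnit U := (Matrix.isUnit_iff_isUnit_det U).mpr
    (IsUnit.of_mul_eq_one _ (by rw [← Matrix.det_mul, hU, Matrix.det_one]))
  calc NormedSpace.exp (U * Matrix.diagonal d * Uᵀ)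
      = NormedSpace.exp (U * Matrix.diagonal d * U⁻¹) := by rw [hinv]
    _ = U * NormedSpace.exp (Matrix.diagonal d) * U⁻¹ := Matrix.exp_conj _ _ hunit
    _ = U * Matrix.diagonal (fun j => Real.exp (d j)) * Uᵀ := by
        rw [Matrix.exp_diagonal, hinv]
        congr 2
        rw [Pi.exp_def]
        funext j
        rw [← Real.exp_eq_exp_ℝ]

lemma integral_exp_mul (c t : ℝ) (hc : c ≠ 0) :
    ∫ s in (0:ℝ)..t, Real.exp (c * s) = (Real.exp (c * t) - 1) / c := by
  rw [intervalIntegral.integral_comp_mul_left (fun x => Real.exp x) hc]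
  simp [integral_exp, div_eq_inv_mul]

lemma key_int {l : ℝ} (t : ℝ) (hl : 0 < l) :
    ∫ s in (0:ℝ)..t, Real.exp (-(2 * s * l)) = (1 - Real.exp (-(2 * l * t))) / (2 * l) := by
  have h : ∀ s : ℝ, -(2 * s * l) = -(2 * l) * s := fun s => by ring
  simp only [h]
  rw [integral_exp_mul _ _ (by nlinarith : -(2*l) ≠ 0)]
  have h2 : -(2 * l) * t = -(2 * l * t) := by ring
  rw [h2]
  have h3 : (2:ℝ) * l ≠ 0 := by positivity
  field_simp
  ring

lemma sum_sq_mulVec {U : Matrix (Fin m) (Fin m) ℝ} (hU : Uᵀ * U = 1) (z : Fin m → ℝ) :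
    ∑ i, (U.mulVec z i) ^ 2 = ∑ j, (z j) ^ 2 := by
  have h1 : ∀ w : Fin m → ℝ, ∑ i, (w i) ^ 2 = w ⬝ᵥ w := fun w => by
    simp [dotProduct, pow_two]
  rw [h1, h1]
  calc U.mulVec z ⬝ᵥ U.mulVec z
      = (U.mulVec z ᵥ* U) ⬝ᵥ z := dotProduct_mulVec _ _ _
    _ = (Uᵀ *ᵥ (U *ᵥ z)) ⬝ᵥ z := by rw [Matrix.mulVec_transpose]
    _ = ((Uᵀ * U) *ᵥ z) ⬝ᵥ z := by rw [Matrix.mulVec_mulVec]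
    _ = z ⬝ᵥ z := by rw [hU, Matrix.one_mulVec]

lemma scalar_key {l t : ℝ} (hl : 0 < l) (ht : 0 < t) :
    (1 - Real.exp (-(2 * l * t))) / (2 * l) + 1 / (2 * l)
      - 2 * (Real.sqrt (1 - Real.exp (-(2 * l * t))) / (2 * l))
    = 1 / 2 * (1 / l *
        (Real.exp (-(4 * l * t)) / (Real.sqrt (1 - Real.exp (-(2 * l * t))) + 1) ^ 2)) := by
  have he1 : Real.exp (-(2 * l * t)) < 1 := by
    rw [Real.exp_lt_one_iff]; nlinarith
  have h1e : (0:ℝ) ≤ 1 - Real.exp (-(2 * l * t)) := by linarith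
  have he4 : Real.exp (-(4 * l * t)) = Real.exp (-(2 * l * t)) ^ 2 := by
    rw [pow_two, ← Real.exp_add]; congr 1; ring
  set u := Real.sqrt (1 - Real.exp (-(2 * l * t))) with hu
  have hu0 : 0 ≤ u := Real.sqrt_nonneg _
  have hu2 : u ^ 2 = 1 - Real.exp (-(2 * l * t)) := Real.sq_sqrt h1e
  have hee : Real.exp (-(2 * l * t)) = 1 - u ^ 2 := by linarith
  rw [he4, hee]
  have hl' : l ≠ 0 := ne_of_gt hl
  have hu1 : u + 1 ≠ 0 := by positivity
  field_simp
  ring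

open scoped MatrixOrder in
lemma psd_sq_eq {A B : Matrix (Fin m) (Fin m) ℝ} (hA : A.PosSemidef) (hB : B.PosSemidef)
    (h : A ^ 2 = B ^ 2) : A = B :=
  (CFC.sq_eq_sq_iff A B hA.nonneg hB.nonneg).mp h

end Stmt9Aux

/-- For a symmetric positive definite `A` with eigenvalues `λ_j > 0` and orthonormal
eigenvectors `v_j`, with `Σ_t = ∫₀^t e^{-2As} ds` (entrywise) and `Σ_∞ = (2A)⁻¹`, and
`Q`, `R` the positive semidefinite square roots of `Σ_t` and `Q Σ_∞ Q` respectively,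
for all `x ∈ ℝ^m` and `t > 0`:
`(|e^{-At}x|² + Tr(Σ_t + Σ_∞ − 2R))^{1/2}
  = (∑_j e^{-2λ_j t} ⟨x,v_j⟩² + ½ ∑_j (1/λ_j) e^{-4λ_j t}/(√(1−e^{-2λ_j t})+1)²)^{1/2}`. -/
theorem stmt_9 {m : ℕ} (A : Matrix (Fin m) (Fin m) ℝ) (lam : Fin m → ℝ)
    (v : Fin m → (Fin m → ℝ)) (x : Fin m → ℝ) (t : ℝ) (ht : 0 < t)
    (hsymm : A.IsSymm)
    (hpos : ∀ j, 0 < lam j)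
    (heig : ∀ j, A.mulVec (v j) = lam j • v j)
    (hortho : Orthonormal ℝ (fun j => euc (v j)))
    (Q R : Matrix (Fin m) (Fin m) ℝ)
    (hQ : Q.PosSemidef)
    (hQ2 : Q * Q = Matrix.of fun i j =>
      ∫ s in (0 : ℝ)..t, (NormedSpace.exp (-((2 * s) • A))) i j)
    (hR : R.PosSemidef)
    (hR2 : R * R = Q * ((2 : ℝ) • A)⁻¹ * Q) :
    Real.sqrt (‖euc ((NormedSpace.exp (-(t • A))).mulVec x)‖ ^ 2 +
        ((Matrix.of fun i j =>
            ∫ s in (0 : ℝ)..t, (NormedSpace.exp (-((2 * s) • A))) i j)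
          + ((2 : ℝ) • A)⁻¹ - (2 : ℝ) • R).trace) =
      Real.sqrt (∑ j, Real.exp (-(2 * lam j * t)) * (x ⬝ᵥ v j) ^ 2 +
        (1 / 2) * ∑ j, (1 / lam j) *
          (Real.exp (-(4 * lam j * t)) /
            (Real.sqrt (1 - Real.exp (-(2 * lam j * t))) + 1) ^ 2)) := by
  classical
  set U : Matrix (Fin m) (Fin m) ℝ := Matrix.of (fun i j => v j i) with hUdef
  have hUtU : Uᵀ * U = 1 := by
    ext i j
    have h := (orthonormal_iff_ite.mp hortho) i j
    simp only [PiLp.inner_apply, RCLike.inner_apply, conj_trivial, euc] at h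
    simpa [Matrix.mul_apply, Matrix.one_apply, hUdef, mul_comm] using h
  have hUUt : U * Uᵀ = 1 := mul_eq_one_comm.mp hUtU
  have hA : A = U * Matrix.diagonal lam * Uᵀ := by
    have h1 : A * U = U * Matrix.diagonal lam := by
      ext i j
      have h2 := congrFun (heig j) i
      simp only [Matrix.mulVec, dotProduct, Pi.smul_apply, smul_eq_mul] at h2
      rw [Matrix.mul_apply, Matrix.mul_diagonal]
      simp only [hUdef, Matrix.of_apply]
      rw [h2, mul_comm]
    calc A = A * (U * Uᵀ) := by rw [hUUt, Matrix.mul_one]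
      _ = A * U * Uᵀ := by rw [Matrix.mul_assoc]
      _ = U * Matrix.diagonal lam * Uᵀ := by rw [h1]
  have hexp : ∀ c : ℝ, NormedSpace.exp (-(c • A))
      = U * Matrix.diagonal (fun j => Real.exp (-(c * lam j))) * Uᵀ := by
    intro c
    have h1 : -(c • A) = U * Matrix.diagonal (fun j => -(c * lam j)) * Uᵀ := by
      have h0 : (fun j => -(c * lam j)) = (-c) • lam := by
        funext j; simp [neg_mul]
      rw [h0, ← Stmt9Aux.cg_smul, ← hA, neg_smul]
    rw [h1, Stmt9Aux.cg_exp hUUt]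
  set dS : Fin m → ℝ := fun j => (1 - Real.exp (-(2 * lam j * t))) / (2 * lam j) with hdS
  set dI : Fin m → ℝ := fun j => 1 / (2 * lam j) with hdI
  set dq : Fin m → ℝ := fun j => Real.sqrt (dS j) with hdq
  set dr : Fin m → ℝ := fun j => Real.sqrt (1 - Real.exp (-(2 * lam j * t))) / (2 * lam j)
    with hdr
  have hexplt : ∀ j, Real.exp (-(2 * lam j * t)) < 1 := by
    intro j
    rw [Real.exp_lt_one_iff]
    nlinarith [hpos j]
  have hdSnn : ∀ j, 0 ≤ dS j := by
    intro j
    rw [hdS]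
    exact div_nonneg (by linarith [hexplt j]) (by linarith [hpos j])
  have hSig : (Matrix.of fun i j =>
        ∫ s in (0:ℝ)..t, (NormedSpace.exp (-((2 * s) • A))) i j)
      = U * Matrix.diagonal dS * Uᵀ := by
    ext i j
    rw [Matrix.of_apply]
    have h1 : ∀ s : ℝ, (NormedSpace.exp (-((2 * s) • A))) i j
        = ∑ k, U i k * Real.exp (-(2 * s * lam k)) * U j k := by
      intro s
      rw [hexp (2 * s), Stmt9Aux.cg_apply]
    rw [intervalIntegral.integral_congr
      (g := fun s => ∑ k, U i k * Real.exp (-(2 * s * lam k)) * U j k) (fun s _ => h1 s)]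
    rw [intervalIntegral.integral_finset_sum]
    · rw [Stmt9Aux.cg_apply]
      refine Finset.sum_congr rfl fun k _ => ?_
      rw [intervalIntegral.integral_mul_const, intervalIntegral.integral_const_mul,
        Stmt9Aux.key_int t (hpos k)]
    · intro k _
      apply Continuous.intervalIntegrable
      continuity
  have h2A : (2:ℝ) • A = U * Matrix.diagonal (fun j => 2 * lam j) * Uᵀ := by
    have h0 : ((2:ℝ) • lam) = fun j => 2 * lam j := by
      funext j; simp
    rw [hA, Stmt9Aux.cg_smul, h0]
  have hSinf : ((2:ℝ) • A)⁻¹ = U * Matrix.diagonal dI * Uᵀ := by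
    apply Matrix.inv_eq_right_inv
    rw [h2A, Stmt9Aux.cg_mul hUtU]
    have h3 : (fun j => 2 * lam j * dI j) = fun _ => (1:ℝ) := by
      funext j
      simp only [hdI]
      have hne : (2:ℝ) * lam j ≠ 0 := ne_of_gt (by linarith [hpos j])
      field_simp
      exact div_self (ne_of_gt (hpos j))
    rw [h3, Matrix.diagonal_one, Matrix.mul_one, hUUt]
  have hQeq : Q = U * Matrix.diagonal dq * Uᵀ := by
    refine Stmt9Aux.psd_sq_eq hQ (Stmt9Aux.cg_psd U fun j => Real.sqrt_nonneg _) ?_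
    have h4 : (fun j => dq j * dq j) = dS := by
      funext j
      simp only [hdq]
      exact Real.mul_self_sqrt (hdSnn j)
    rw [pow_two, pow_two, hQ2, hSig, Stmt9Aux.cg_mul hUtU]
    simp only [h4]
  have hdrnn : ∀ j, 0 ≤ dr j := by
    intro j
    rw [hdr]
    exact div_nonneg (Real.sqrt_nonneg _) (by linarith [hpos j])
  have hReq : R = U * Matrix.diagonal dr * Uᵀ := by
    refine Stmt9Aux.psd_sq_eq hR (Stmt9Aux.cg_psd U hdrnn) ?_
    have h4 : (fun j => dq j * dI j * dq j) = (fun j => dr j * dr j) := by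
      funext j
      have h1 : 0 ≤ 1 - Real.exp (-(2 * lam j * t)) := by linarith [hexplt j]
      have e1 : dq j * dq j = dS j := by
        simp only [hdq]
        exact Real.mul_self_sqrt (hdSnn j)
      rw [mul_right_comm, e1]
      simp only [hdS, hdI, hdr]
      rw [div_mul_div_comm, div_mul_div_comm, Real.mul_self_sqrt h1, mul_one]
    rw [pow_two, pow_two, hR2, hSinf, hQeq, Stmt9Aux.cg_mul hUtU, Stmt9Aux.cg_mul hUtU,
      Stmt9Aux.cg_mul hUtU]
    simp only [h4]
  have htr : ((Matrix.of fun i j =>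
        ∫ s in (0:ℝ)..t, (NormedSpace.exp (-((2 * s) • A))) i j)
      + ((2:ℝ) • A)⁻¹ - (2:ℝ) • R).trace = ∑ j, (dS j + dI j - 2 * dr j) := by
    rw [hSig, hSinf, hReq, Stmt9Aux.cg_smul, Matrix.trace_sub, Matrix.trace_add,
      Stmt9Aux.cg_trace hUtU, Stmt9Aux.cg_trace hUtU, Stmt9Aux.cg_trace hUtU,
      ← Finset.sum_add_distrib, ← Finset.sum_sub_distrib]
    exact Finset.sum_congr rfl fun j _ => by simp [smul_eq_mul]
  have hnorm : ‖euc ((NormedSpace.exp (-(t • A))).mulVec x)‖ ^ 2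
      = ∑ j, Real.exp (-(2 * lam j * t)) * (x ⬝ᵥ v j) ^ 2 := by
    have h1 : ‖euc ((NormedSpace.exp (-(t • A))).mulVec x)‖ ^ 2
        = ∑ i, ((NormedSpace.exp (-(t • A))).mulVec x i) ^ 2 := by
      rw [EuclideanSpace.norm_eq, Real.sq_sqrt (by positivity)]
      refine Finset.sum_congr rfl fun i _ => ?_
      simp only [euc]
      rw [Real.norm_eq_abs, sq_abs]
    rw [h1, hexp t]
    have h2 : (U * Matrix.diagonal (fun j => Real.exp (-(t * lam j))) * Uᵀ).mulVec x
        = U.mulVec (fun j => Real.exp (-(t * lam j)) * (x ⬝ᵥ v j)) := by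
      have hz : (Matrix.diagonal (fun j => Real.exp (-(t * lam j)))) *ᵥ (Uᵀ *ᵥ x)
          = fun j => Real.exp (-(t * lam j)) * (x ⬝ᵥ v j) := by
        funext j
        rw [Matrix.mulVec_diagonal]
        congr 1
        simp [Matrix.mulVec, dotProduct, hUdef, mul_comm]
      rw [← Matrix.mulVec_mulVec, ← Matrix.mulVec_mulVec, hz]
    rw [h2, Stmt9Aux.sum_sq_mulVec hUtU]
    refine Finset.sum_congr rfl fun j _ => ?_
    rw [mul_pow]
    congr 1
    rw [pow_two, ← Real.exp_add]
    congr 1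
    ring
  rw [hnorm, htr]
  congr 1
  congr 1
  rw [Finset.mul_sum]
  refine Finset.sum_congr rfl fun j _ => ?_
  simp only [hdS, hdI, hdr]
  exact Stmt9Aux.scalar_key (hpos j) ht
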